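/- arXiv:1404.6867 — 2 statements merged into one kernel-verified Lean document; each statement's English description precedes it below -/
import Mathlib

section
/- Let $f$ be a non-negative multiplicative arithmetic function such that $\sum_{p\le z} f(p)\log p \le Bz$ for all $z\ge 2$ (sum over primes) and $\sum_{p,\,\nu\ge 2} f(p^\nu)p^{-\nu}\log(p^\nu) \le A$. Then for all $x\ge 2$, $\sum_{n\le x} f(n) \le (A+B+1)\,\frac{x}{\log x}\sum_{n\le x} \frac{f(n)}{n}$. -/
open Finset

theorem stmt0 (f : ℕ → ℝ) (A B : ℝ) (hA : 0 < A) (hB : 0 < B)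
    (hf_nonneg : ∀ n, 0 ≤ f n) (hf_one : f 1 = 1)
    (hf_mult : ∀ m n : ℕ, Nat.Coprime m n → f (m * n) = f m * f n)
    (h1 : ∀ z : ℝ, 2 ≤ z →
      ∑ p ∈ (Finset.Icc 1 ⌊z⌋₊).filter Nat.Prime, f p * Real.log p ≤ B * z)
    (h2 : ∀ S : Finset (ℕ × ℕ), (∀ q ∈ S, q.1.Prime ∧ 2 ≤ q.2) →
      ∑ q ∈ S, f (q.1 ^ q.2) / (q.1 : ℝ) ^ q.2 * Real.log ((q.1 : ℝ) ^ q.2) ≤ A) :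
    ∀ x : ℝ, 2 ≤ x →
      ∑ n ∈ Finset.Icc 1 ⌊x⌋₊, f n ≤
        (A + B + 1) * (x / Real.log x) * ∑ n ∈ Finset.Icc 1 ⌊x⌋₊, f n / (n : ℝ) := by
  intro x hx
  have hx0 : (0:ℝ) < x := by linarith
  set N := ⌊x⌋₊ with hNdef
  have hN2 : 2 ≤ N := Nat.le_floor (by exact_mod_cast hx)
  have hNx : (N : ℝ) ≤ x := Nat.floor_le (by linarith)
  have hL : 0 < Real.log x := Real.log_pos (by linarith)
  set Q := ∑ n ∈ Icc 1 N, f n / (n : ℝ) with hQdef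
  have hQ0 : 0 ≤ Q := sum_nonneg fun n _ => div_nonneg (hf_nonneg n) (Nat.cast_nonneg n)
  -- the summand over triples ((p,ν),m)
  set g : (ℕ × ℕ) × ℕ → ℝ :=
    fun q => f (q.1.1 ^ q.1.2) * f q.2 * Real.log ((q.1.1 : ℝ) ^ q.1.2) with hgdef
  set U : Finset ((ℕ × ℕ) × ℕ) :=
    ((Icc 1 N ×ˢ Icc 1 N) ×ˢ Icc 1 N).filter
      (fun q => q.1.1.Prime ∧ q.1.1 ^ q.1.2 * q.2 ≤ N) with hUdef
  -- Step 1: log decomposition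
  have hlog : ∀ n ∈ Icc 1 N, f n * Real.log n =
      ∑ p ∈ n.primeFactors,
        f (p ^ n.factorization p) * f (n / p ^ n.factorization p) *
          Real.log ((p : ℝ) ^ n.factorization p) := by
    intro n hn
    have hn0 : n ≠ 0 := by have := (mem_Icc.mp hn).1; omega
    have hlogn : Real.log n = ∑ p ∈ n.primeFactors, Real.log ((p : ℝ) ^ n.factorization p) := by
      conv_lhs => rw [← Nat.factorization_prod_pow_eq_self hn0]
      simp only [Finsupp.prod, Nat.support_factorization]
      push_cast
      rw [Real.log_prod]
      intro p hp
      have hp' : p.Prime := Nat.prime_of_mem_primeFactors hp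
      exact pow_ne_zero _ (Nat.cast_ne_zero.mpr hp'.ne_zero)
    rw [hlogn, Finset.mul_sum]
    refine Finset.sum_congr rfl fun p hp => ?_
    have hpp : p.Prime := Nat.prime_of_mem_primeFactors hp
    have hfn : f n = f (p ^ n.factorization p) * f (n / p ^ n.factorization p) := by
      conv_lhs => rw [← Nat.ordProj_mul_ordCompl_eq_self n p]
      exact hf_mult _ _ ((Nat.coprime_ordCompl hpp hn0).pow_left _)
    rw [hfn]
  -- Step 2: bound sum of f n log n by sum over U
  have hstep2 : ∑ n ∈ Icc 1 N, f n * Real.log n ≤ ∑ q ∈ U, g q := by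
    set E : (Σ _ : ℕ, ℕ) → (ℕ × ℕ) × ℕ :=
      fun σ => ((σ.2, σ.1.factorization σ.2), σ.1 / σ.2 ^ σ.1.factorization σ.2) with hEdef
    set s : Finset (Σ _ : ℕ, ℕ) := (Icc 1 N).sigma (fun n => n.primeFactors) with hsdef
    have hEsum : ∑ n ∈ Icc 1 N, f n * Real.log n = ∑ σ ∈ s, g (E σ) := by
      rw [hsdef, Finset.sum_sigma]
      refine Finset.sum_congr rfl fun n hn => ?_
      rw [hlog n hn]
      try refine Finset.sum_congr rfl fun p hp => ?_
      try simp [hgdef, hEdef]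
    have hinj : ∀ σ ∈ s, ∀ τ ∈ s, E σ = E τ → σ = τ := by
      rintro ⟨n, p⟩ hσ ⟨n', p'⟩ hτ heq
      simp only [hEdef, Prod.mk.injEq] at heq
      obtain ⟨⟨h1, h2⟩, h3⟩ := heq
      subst h1
      have hn : n = n' := by
        conv_lhs => rw [← Nat.ordProj_mul_ordCompl_eq_self n p]
        conv_rhs => rw [← Nat.ordProj_mul_ordCompl_eq_self n' p]
        rw [h3, h2]
      subst hn; rfl
    have himg : s.image E ⊆ U := by
      intro q hq
      simp only [Finset.mem_image] at hq
      obtain ⟨⟨n, p⟩, hmem, rfl⟩ := hq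
      rw [hsdef, Finset.mem_sigma] at hmem
      obtain ⟨hnI, hp⟩ := hmem
      have hn1 : 1 ≤ n := (mem_Icc.mp hnI).1
      have hnN : n ≤ N := (mem_Icc.mp hnI).2
      have hn0 : n ≠ 0 := by omega
      have hpp : p.Prime := Nat.prime_of_mem_primeFactors hp
      have hpn : p ≤ n := Nat.le_of_mem_primeFactors hp
      have hν1 : 1 ≤ n.factorization p :=
        (Nat.Prime.factorization_pos_of_dvd hpp hn0 (Nat.dvd_of_mem_primeFactors hp))
      have hproj : p ^ n.factorization p * (n / p ^ n.factorization p) = n :=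
        Nat.ordProj_mul_ordCompl_eq_self n p
      have hpowle : p ^ n.factorization p ≤ n := Nat.ordProj_le p hn0
      have hνle : n.factorization p ≤ N :=
        le_trans (le_of_lt (lt_of_lt_of_le Nat.lt_two_pow_self
          (Nat.pow_le_pow_left hpp.two_le _))) (le_trans hpowle hnN)
      have hm1 : 1 ≤ n / p ^ n.factorization p := Nat.ordCompl_pos p hn0
      have hmN : n / p ^ n.factorization p ≤ N := le_trans (Nat.ordCompl_le n p) hnN
      rw [hUdef]
      simp only [Finset.mem_filter, Finset.mem_product, mem_Icc, hEdef]
      refine ⟨⟨⟨⟨hpp.one_lt.le.trans' (by norm_num) |>.trans ?_, ?_⟩, ?_, ?_⟩, ?_, ?_⟩, ?_, ?_⟩ <;>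
        first
          | exact le_rfl
          | omega
          | exact hpp
          | (rw [hproj]; exact hnN)
    calc ∑ n ∈ Icc 1 N, f n * Real.log n = ∑ σ ∈ s, g (E σ) := hEsum
    _ = ∑ q ∈ s.image E, g q := (Finset.sum_image hinj).symm
    _ ≤ ∑ q ∈ U, g q := by
        refine Finset.sum_le_sum_of_subset_of_nonneg himg fun q hqU _ => ?_
        rw [hUdef] at hqU
        simp only [Finset.mem_filter, Finset.mem_product, mem_Icc] at hqU
        have hp1 : 1 ≤ q.1.1 := hqU.1.1.1.1
        rw [hgdef]
        refine mul_nonneg (mul_nonneg (hf_nonneg _) (hf_nonneg _)) (Real.log_nonneg ?_)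
        exact one_le_pow₀ (by exact_mod_cast hp1)
  -- Step 3: split U
  have hU1 : ∑ q ∈ U.filter (fun q => q.1.2 = 1), g q ≤ B * x * Q := by
    have hx0 : (0:ℝ) < x := by linarith
    have key : ∑ q ∈ U.filter (fun q => q.1.2 = 1), g q =
        ∑ σ ∈ (Icc 1 N).sigma (fun m => (Icc 1 (N / m)).filter Nat.Prime),
          f σ.1 * (f σ.2 * Real.log σ.2) := by
      refine Finset.sum_bij' (fun q _ => (⟨q.2, q.1.1⟩ : Σ _ : ℕ, ℕ))
          (fun σ _ => ((σ.2, 1), σ.1)) ?_ ?_ ?_ ?_ ?_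
      · rintro ⟨⟨p, ν⟩, m⟩ hq
        simp only [hUdef, Finset.mem_filter, Finset.mem_product, mem_Icc] at hq
        obtain ⟨⟨⟨⟨hp1, hpN⟩, hν1, hνN⟩, hm1, hmN⟩, ⟨hpp, hle⟩⟩ := hq.1
        have hν : ν = 1 := hq.2
        subst hν
        simp only [Finset.mem_sigma, mem_Icc, Finset.mem_filter]
        refine ⟨⟨hm1, hmN⟩, ⟨?_, ?_⟩, hpp⟩
        · omega
        · rw [Nat.le_div_iff_mul_le (by omega)]
          rw [pow_one] at hle; omega
      · rintro ⟨m, p⟩ hσ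
        simp only [Finset.mem_sigma, mem_Icc, Finset.mem_filter] at hσ
        obtain ⟨⟨hm1, hmN⟩, ⟨hp1, hpN⟩, hpp⟩ := hσ
        have hle : p * m ≤ N := by
          rw [Nat.le_div_iff_mul_le (by omega)] at hpN; omega
        simp only [hUdef, Finset.mem_filter, Finset.mem_product, mem_Icc]
        have hple : p ≤ N := le_trans (Nat.le_mul_of_pos_right p (by omega)) hle
        exact ⟨⟨⟨⟨⟨by omega, hple⟩, by omega, by omega⟩, hm1, hmN⟩, hpp, by rwa [pow_one]⟩, trivial⟩
      · rintro ⟨⟨p, ν⟩, m⟩ hq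
        have hν : ν = 1 := (Finset.mem_filter.mp hq).2
        subst hν; rfl
      · rintro ⟨m, p⟩ hσ; rfl
      · rintro ⟨⟨p, ν⟩, m⟩ hq
        have hν : ν = 1 := (Finset.mem_filter.mp hq).2
        subst hν
        simp only [hgdef, pow_one, Nat.cast_id]
        ring
    have key2 : ∑ σ ∈ (Icc 1 N).sigma (fun m => (Icc 1 (N / m)).filter Nat.Prime),
        f σ.1 * (f σ.2 * Real.log σ.2) =
        ∑ m ∈ Icc 1 N, f m * ∑ p ∈ (Icc 1 (N / m)).filter Nat.Prime, f p * Real.log p := by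
      rw [Finset.sum_sigma]
      refine Finset.sum_congr rfl fun m _ => ?_
      rw [Finset.mul_sum]
    rw [key, key2, hQdef, Finset.mul_sum]
    refine Finset.sum_le_sum fun m hm => ?_
    obtain ⟨hm1, hmN⟩ := mem_Icc.mp hm
    have hm0 : (0:ℝ) < (m:ℝ) := by exact_mod_cast hm1
    have hinner : ∑ p ∈ (Icc 1 (N / m)).filter Nat.Prime, f p * Real.log p ≤ B * (x / m) := by
      by_cases hc : 2 ≤ N / m
      · have hz : (2:ℝ) ≤ x / m := by
          rw [le_div_iff₀ hm0]
          have : 2 * m ≤ N := by rw [Nat.le_div_iff_mul_le (by omega)] at hc; omega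
          calc (2:ℝ) * m ≤ (N:ℝ) := by exact_mod_cast this
          _ ≤ x := hNx
        have := h1 (x / m) hz
        rwa [Nat.floor_div_natCast x m, ← hNdef] at this
      · have hempty : (Icc 1 (N / m)).filter Nat.Prime = ∅ := by
          refine Finset.filter_false_of_mem fun p hp => ?_
          have := (mem_Icc.mp hp).2
          intro hpp
          have := hpp.two_le
          omega
        rw [hempty, Finset.sum_empty]
        positivity
    calc f m * ∑ p ∈ (Icc 1 (N / m)).filter Nat.Prime, f p * Real.log p
        ≤ f m * (B * (x / m)) := by
          exact mul_le_mul_of_nonneg_left hinner (hf_nonneg m)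
    _ = B * x * (f m / m) := by field_simp
  have hU2 : ∑ q ∈ U.filter (fun q => ¬ q.1.2 = 1), g q ≤ A * x * Q := by
    have hx0 : (0:ℝ) < x := by linarith
    have hQ0 : 0 ≤ Q := by
      rw [hQdef]
      exact sum_nonneg fun n _ => div_nonneg (hf_nonneg n) (Nat.cast_nonneg n)
    set P2 : Finset (ℕ × ℕ) :=
      (Icc 1 N ×ˢ Icc 1 N).filter (fun q => q.1.Prime ∧ 2 ≤ q.2 ∧ q.1 ^ q.2 ≤ N) with hP2
    have key : ∑ q ∈ U.filter (fun q => ¬ q.1.2 = 1), g q =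
        ∑ σ ∈ P2.sigma (fun q => Icc 1 (N / q.1 ^ q.2)),
          f (σ.1.1 ^ σ.1.2) * f σ.2 * Real.log ((σ.1.1 : ℝ) ^ σ.1.2) := by
      refine Finset.sum_bij' (fun q _ => (⟨q.1, q.2⟩ : Σ _ : ℕ × ℕ, ℕ))
        (fun σ _ => (σ.1, σ.2)) ?_ ?_ ?_ ?_ ?_
      · rintro ⟨⟨p, ν⟩, m⟩ hq
        simp only [hUdef, Finset.mem_filter, Finset.mem_product, mem_Icc] at hq
        obtain ⟨⟨⟨⟨⟨hp1, hpN⟩, hν1, hνN⟩, hm1, hmN⟩, hpp, hle⟩, hν⟩ := hq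
        have hpow0 : 0 < p ^ ν := pow_pos (by omega) ν
        simp only [hP2, Finset.mem_sigma, Finset.mem_filter, Finset.mem_product, mem_Icc]
        refine ⟨⟨⟨⟨hp1, hpN⟩, hν1, hνN⟩, hpp, by omega, ?_⟩, by omega, ?_⟩
        · calc p ^ ν ≤ p ^ ν * m := Nat.le_mul_of_pos_right _ (by omega)
          _ ≤ N := hle
        · rw [Nat.le_div_iff_mul_le hpow0, mul_comm]; exact hle
      · rintro ⟨⟨p, ν⟩, m⟩ hσ
        simp only [hP2, Finset.mem_sigma, Finset.mem_filter, Finset.mem_product, mem_Icc] at hσ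
        obtain ⟨⟨⟨⟨hp1, hpN⟩, hν1, hνN⟩, hpp, hν2, hpow⟩, hm1, hmK⟩ := hσ
        have hpow0 : 0 < p ^ ν := pow_pos (by omega) ν
        have hle : p ^ ν * m ≤ N := by rw [mul_comm, ← Nat.le_div_iff_mul_le hpow0]; exact hmK
        simp only [hUdef, Finset.mem_filter, Finset.mem_product, mem_Icc]
        have hmN : m ≤ N := le_trans hmK (Nat.div_le_self _ _)
        exact ⟨⟨⟨⟨⟨hp1, hpN⟩, hν1, hνN⟩, hm1, hmN⟩, hpp, hle⟩, by omega⟩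
      · rintro ⟨⟨p, ν⟩, m⟩ _; rfl
      · rintro ⟨⟨p, ν⟩, m⟩ _; rfl
      · rintro ⟨⟨p, ν⟩, m⟩ _; simp [hgdef]
    have key2 : ∑ σ ∈ P2.sigma (fun q => Icc 1 (N / q.1 ^ q.2)),
        f (σ.1.1 ^ σ.1.2) * f σ.2 * Real.log ((σ.1.1 : ℝ) ^ σ.1.2) =
        ∑ q ∈ P2, (f (q.1 ^ q.2) * Real.log ((q.1 : ℝ) ^ q.2)) *
          ∑ m ∈ Icc 1 (N / q.1 ^ q.2), f m := by
      rw [Finset.sum_sigma]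
      refine Finset.sum_congr rfl fun q _ => ?_
      rw [Finset.mul_sum]
      exact Finset.sum_congr rfl fun m _ => by ring
    have hinner : ∀ q ∈ P2, ∑ m ∈ Icc 1 (N / q.1 ^ q.2), f m ≤ (x / (q.1:ℝ) ^ q.2) * Q := by
      rintro ⟨p, ν⟩ hq
      simp only [hP2, Finset.mem_filter, Finset.mem_product, mem_Icc] at hq
      obtain ⟨⟨⟨hp1, hpN⟩, hν1, hνN⟩, hpp, hν2, hpow⟩ := hq
      have hpow0 : 0 < p ^ ν := pow_pos (by omega) ν
      have hpowR : (0:ℝ) < ((p:ℝ)) ^ ν := by positivity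
      calc ∑ m ∈ Icc 1 (N / p ^ ν), f m
          ≤ ∑ m ∈ Icc 1 (N / p ^ ν), (x / (p:ℝ) ^ ν) * (f m / m) := by
            refine Finset.sum_le_sum fun m hm => ?_
            obtain ⟨hm1, hmK⟩ := mem_Icc.mp hm
            have hm0 : (0:ℝ) < (m:ℝ) := by exact_mod_cast hm1
            have hle : p ^ ν * m ≤ N := by rw [mul_comm, ← Nat.le_div_iff_mul_le hpow0]; exact hmK
            have hleR : ((p:ℝ)) ^ ν * m ≤ x := by
              calc ((p:ℝ)) ^ ν * (m:ℝ) = ((p ^ ν * m : ℕ) : ℝ) := by push_cast; ring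
              _ ≤ (N:ℝ) := by exact_mod_cast hle
              _ ≤ x := hNx
            rw [div_mul_div_comm, le_div_iff₀ (by positivity)]
            nlinarith [hf_nonneg m]
      _ ≤ ∑ m ∈ Icc 1 N, (x / (p:ℝ) ^ ν) * (f m / m) := by
            refine Finset.sum_le_sum_of_subset_of_nonneg
              (Finset.Icc_subset_Icc le_rfl (Nat.div_le_self _ _)) fun m _ _ => ?_
            exact mul_nonneg (by positivity) (div_nonneg (hf_nonneg m) (Nat.cast_nonneg m))
      _ = (x / (p:ℝ) ^ ν) * Q := by rw [hQdef, Finset.mul_sum]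
    calc ∑ q ∈ U.filter (fun q => ¬ q.1.2 = 1), g q
        = ∑ q ∈ P2, (f (q.1 ^ q.2) * Real.log ((q.1 : ℝ) ^ q.2)) *
          ∑ m ∈ Icc 1 (N / q.1 ^ q.2), f m := by rw [key, key2]
    _ ≤ ∑ q ∈ P2, (f (q.1 ^ q.2) * Real.log ((q.1 : ℝ) ^ q.2)) * ((x / (q.1:ℝ) ^ q.2) * Q) := by
          refine Finset.sum_le_sum fun q hq => ?_
          have hq' := hq
          simp only [hP2, Finset.mem_filter, Finset.mem_product, mem_Icc] at hq'
          obtain ⟨⟨⟨hp1, hpN⟩, hν1, hνN⟩, hpp, hν2, hpow⟩ := hq'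
          refine mul_le_mul_of_nonneg_left (hinner q hq) ?_
          refine mul_nonneg (hf_nonneg _) (Real.log_nonneg (one_le_pow₀ ?_))
          exact_mod_cast hp1
    _ = (x * Q) * ∑ q ∈ P2, f (q.1 ^ q.2) / (q.1 : ℝ) ^ q.2 * Real.log ((q.1 : ℝ) ^ q.2) := by
          rw [Finset.mul_sum]
          refine Finset.sum_congr rfl fun q hq => ?_
          simp only [hP2, Finset.mem_filter, Finset.mem_product, mem_Icc] at hq
          obtain ⟨⟨⟨hp1, hpN⟩, hν1, hνN⟩, hpp, hν2, hpow⟩ := hq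
          have hpowR : (0:ℝ) < ((q.1:ℝ)) ^ q.2 := by
            have : (0:ℝ) < (q.1:ℝ) := by exact_mod_cast (by omega : 0 < q.1)
            positivity
          field_simp
    _ ≤ (x * Q) * A := by
          refine mul_le_mul_of_nonneg_left (h2 P2 ?_) (by positivity)
          intro q hq
          simp only [hP2, Finset.mem_filter, Finset.mem_product, mem_Icc] at hq
          exact ⟨hq.2.1, hq.2.2.1⟩
    _ = A * x * Q := by ring
  have hsplit : ∑ q ∈ U, g q ≤ (A + B) * x * Q := by
    rw [← Finset.sum_filter_add_sum_filter_not U (fun q => q.1.2 = 1)]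
    nlinarith
  -- Step 4: Chebyshev-style comparison with log x
  have hstepA : (∑ n ∈ Icc 1 N, f n) * Real.log x ≤
      (∑ n ∈ Icc 1 N, f n * Real.log n) + x * Q := by
    have hx0 : (0:ℝ) < x := by linarith
    calc (∑ n ∈ Icc 1 N, f n) * Real.log x = ∑ n ∈ Icc 1 N, f n * Real.log x := by
          rw [Finset.sum_mul]
    _ ≤ ∑ n ∈ Icc 1 N, (f n * Real.log n + x * (f n / n)) := by
          refine Finset.sum_le_sum fun n hn => ?_
          have hn1 : 1 ≤ n := (mem_Icc.mp hn).1
          have hn0 : (0:ℝ) < (n:ℝ) := by exact_mod_cast hn1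
          have hlog : Real.log x - Real.log n ≤ x / n := by
            rw [← Real.log_div (ne_of_gt hx0) (ne_of_gt hn0)]
            have := Real.log_le_sub_one_of_pos (show (0:ℝ) < x / n by positivity)
            linarith
          have hmul : f n * (Real.log x - Real.log n) ≤ f n * (x / n) :=
            mul_le_mul_of_nonneg_left hlog (hf_nonneg n)
          have : x * (f n / n) = f n * (x / n) := by ring
          nlinarith
    _ = (∑ n ∈ Icc 1 N, f n * Real.log n) + x * Q := by
          rw [Finset.sum_add_distrib, ← Finset.mul_sum, hQdef]
  have key : (∑ n ∈ Icc 1 N, f n) * Real.log x ≤ (A + B + 1) * x * Q := by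
    calc (∑ n ∈ Icc 1 N, f n) * Real.log x ≤ (∑ n ∈ Icc 1 N, f n * Real.log n) + x * Q := hstepA
    _ ≤ (A + B) * x * Q + x * Q := by linarith [le_trans hstep2 hsplit]
    _ = (A + B + 1) * x * Q := by ring
  have hrhs : (A + B + 1) * (x / Real.log x) * Q = ((A + B + 1) * x * Q) / Real.log x := by
    field_simp
  rw [hrhs, le_div_iff₀ hL]
  exact key
end

section
/- Let $f:\mathbb{N}\to\mathbb{R}_{\ge 0}$ satisfy $Q(t):=\sum_{p\le t} f(p)\log p \le Ct$ for all $t\ge 2$ (sum over primes) and $f(p)\log p \le C\,p/R(p)$ for all primes $p$, where $R:(1,\infty)\to(1,\infty)$ is increasing with $\int_2^\infty \frac{dt}{R(t)\,t\log t} < \infty$ and $\frac{R'(t)}{R(t)}t\le M$ for $t\ge 2$. Then $\sum_{p} \frac{f(p)^2}{p^2}\log p < \infty$. -/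
open MeasureTheory

theorem stmt16 (f : ℕ → ℝ) (hf : ∀ n, 0 ≤ f n) (C M : ℝ) (hC : 0 < C)
    (R : ℝ → ℝ) (hR_pos : ∀ t, 1 < t → 1 < R t)
    (hR_mono : MonotoneOn R (Set.Ioi 1))
    (hR_diff : ∀ t, 1 < t → DifferentiableAt ℝ R t)
    (hQ : ∀ t : ℝ, 2 ≤ t →
      ∑ p ∈ (Finset.Icc 1 ⌊t⌋₊).filter Nat.Prime, f p * Real.log p ≤ C * t)
    (hfp : ∀ p : ℕ, p.Prime → f p * Real.log p ≤ C * p / R p)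
    (hint : MeasureTheory.IntegrableOn (fun t => 1 / (R t * t * Real.log t))
      (Set.Ici 2))
    (hM : ∀ t : ℝ, 2 ≤ t → deriv R t / R t * t ≤ M) :
    Summable (fun p : Nat.Primes =>
      f (p : ℕ) ^ 2 / (((p : ℕ) : ℝ)) ^ 2 * Real.log ((p : ℕ) : ℝ)) := by
  classical
  set w : ℝ → ℝ := fun t => 1 / (R t * t * Real.log t) with hw_def
  -- basic positivity facts
  have hw_pos : ∀ t : ℝ, 2 ≤ t → 0 < w t := by
    intro t ht
    have h1 : (1:ℝ) < t := by linarith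
    have hR1 : 1 < R t := hR_pos t h1
    have hlog : 0 < Real.log t := Real.log_pos h1
    have : 0 < R t * t * Real.log t :=
      mul_pos (mul_pos (by linarith) (by linarith)) hlog
    exact div_pos one_pos this
  have hw_nonneg : ∀ t ∈ Set.Ici (2:ℝ), 0 ≤ w t := fun t ht => (hw_pos t ht).le
  set A : ℝ := ∫ t in Set.Ici (2:ℝ), w t with hA_def
  have hA_sub : ∀ s : Set ℝ, s ⊆ Set.Ici (2:ℝ) → ∫ t in s, w t ≤ A := by
    intro s hs
    apply MeasureTheory.setIntegral_mono_set hint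
    · exact (MeasureTheory.ae_restrict_mem measurableSet_Ici).mono hw_nonneg
    · exact HasSubset.Subset.eventuallyLE hs
  -- the constant D k
  set D : ℕ → ℝ := fun k => R ((2:ℝ)^(k+1)) * (2:ℝ)^(k+1) * ((k+1) * Real.log 2)
    with hD_def
  have h2pow1 : ∀ k : ℕ, (1:ℝ) < 2^(k+1) := by
    intro k
    calc (1:ℝ) < 2 := one_lt_two
    _ = 2^1 := (pow_one 2).symm
    _ ≤ 2^(k+1) := pow_le_pow_right₀ one_le_two (by omega)
  have h2pow2 : ∀ k : ℕ, 1 ≤ k → (2:ℝ) ≤ 2^k := by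
    intro k hk
    calc (2:ℝ) = 2^1 := (pow_one 2).symm
    _ ≤ 2^k := pow_le_pow_right₀ one_le_two hk
  have hD_pos : ∀ k : ℕ, 0 < D k := by
    intro k
    have h1 := hR_pos _ (h2pow1 k)
    have h2 : (0:ℝ) < 2^(k+1) := by positivity
    have h3 : (0:ℝ) < ((k:ℝ)+1) * Real.log 2 :=
      mul_pos (by positivity) (Real.log_pos one_lt_two)
    exact mul_pos (mul_pos (by linarith) h2) h3
  -- integral lower bound on dyadic blocks
  have hIk : ∀ k : ℕ, 1 ≤ k →
      (1 / D k) * 2^k ≤ ∫ t in Set.Ico ((2:ℝ)^k) ((2:ℝ)^(k+1)), w t := by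
    intro k hk
    have hab : (2:ℝ)^k ≤ 2^(k+1) := pow_le_pow_right₀ one_le_two (by omega)
    have hsub : Set.Ico ((2:ℝ)^k) ((2:ℝ)^(k+1)) ⊆ Set.Ici 2 := by
      intro t ht
      exact le_trans (h2pow2 k hk) ht.1
    have hwi : IntegrableOn w (Set.Ico ((2:ℝ)^k) ((2:ℝ)^(k+1))) := hint.mono_set hsub
    have hconst : ∫ _t in Set.Ico ((2:ℝ)^k) ((2:ℝ)^(k+1)), (1 / D k)
        = (1 / D k) * 2^k := by
      rw [MeasureTheory.setIntegral_const, Real.volume_real_Ico_of_le hab]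
      have h : (2:ℝ)^(k+1) - 2^k = 2^k := by rw [pow_succ]; ring
      rw [h, smul_eq_mul, mul_comm]
    rw [← hconst]
    apply MeasureTheory.setIntegral_mono_on
    · exact MeasureTheory.integrableOn_const measure_Ico_lt_top.ne
    · exact hwi
    · exact measurableSet_Ico
    · intro t ht
      have h2t : (2:ℝ) ≤ t := le_trans (h2pow2 k hk) ht.1
      have h1t : (1:ℝ) < t := by linarith
      have hRt1 : 1 < R t := hR_pos t h1t
      have hlogt : 0 < Real.log t := Real.log_pos h1t
      have hRk1 : 1 < R ((2:ℝ)^(k+1)) := hR_pos _ (h2pow1 k)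
      have hRt : R t ≤ R ((2:ℝ)^(k+1)) :=
        hR_mono (Set.mem_Ioi.2 h1t) (Set.mem_Ioi.2 (h2pow1 k)) ht.2.le
      have hlog2 : Real.log t ≤ ((k:ℝ)+1) * Real.log 2 := by
        have := Real.log_le_log (by linarith : (0:ℝ) < t) ht.2.le
        rwa [Real.log_pow, Nat.cast_add, Nat.cast_one] at this
      have hDle : R t * t * Real.log t ≤ D k := by
        apply mul_le_mul _ hlog2 hlogt.le _
        · exact mul_le_mul hRt ht.2.le (by linarith) (by linarith)
        · have hp : (0:ℝ) < 2^(k+1) := by positivity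
          positivity
      have hpos : 0 < R t * t * Real.log t :=
        mul_pos (mul_pos (by linarith) (by linarith)) hlogt
      exact one_div_le_one_div_of_le hpos hDle
  -- sum over primes in a dyadic block
  have hSk : ∀ k : ℕ, 1 ≤ k →
      ∑ p ∈ (Finset.Ico (2^(k+1)) (2^(k+2))).filter Nat.Prime,
        C * f p / (R p * p)
      ≤ 4 * C^2 * ∫ t in Set.Ico ((2:ℝ)^k) ((2:ℝ)^(k+1)), w t := by
    intro k hk
    have hterm : ∀ p ∈ (Finset.Ico (2^(k+1)) (2^(k+2))).filter Nat.Prime,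
        C * f p / (R p * p) ≤ C / D k * (f p * Real.log p) := by
      intro p hp
      rw [Finset.mem_filter, Finset.mem_Ico] at hp
      obtain ⟨⟨hp1, _hp2⟩, _hpp⟩ := hp
      have hpc : ((2:ℝ))^(k+1) ≤ (p:ℝ) := by
        have h : ((2^(k+1) : ℕ) : ℝ) ≤ (p:ℝ) := Nat.cast_le.2 hp1
        push_cast at h; exact h
      have h1p : (1:ℝ) < p := lt_of_lt_of_le (h2pow1 k) hpc
      have hp0 : (0:ℝ) < p := by linarith
      have hRp1 : 1 < R ((p:ℕ):ℝ) := hR_pos _ h1p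
      have hRp : R ((2:ℝ)^(k+1)) ≤ R (p:ℝ) :=
        hR_mono (Set.mem_Ioi.2 (h2pow1 k)) (Set.mem_Ioi.2 h1p) hpc
      have hlogp0 : 0 < Real.log p := Real.log_pos h1p
      have hlogp : ((k:ℝ)+1) * Real.log 2 ≤ Real.log p := by
        have := Real.log_le_log (by positivity : (0:ℝ) < 2^(k+1)) hpc
        rwa [Real.log_pow, Nat.cast_add, Nat.cast_one] at this
      have hRk1 : 1 < R ((2:ℝ)^(k+1)) := hR_pos _ (h2pow1 k)
      have hDle : D k ≤ R p * p * Real.log p := by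
        apply mul_le_mul _ hlogp _ _
        · exact mul_le_mul hRp hpc (by positivity) (by linarith)
        · positivity
        · positivity
      have hden1 : (0:ℝ) < R p * p := mul_pos (by linarith) hp0
      have hden2 : (0:ℝ) < R p * p * Real.log p := mul_pos hden1 hlogp0
      calc C * f p / (R p * p)
          = C * (f p * Real.log p) / (R p * p * Real.log p) := by
            rw [div_eq_div_iff hden1.ne' hden2.ne']; ring
        _ ≤ C * (f p * Real.log p) / D k :=
            div_le_div_of_nonneg_left
              (mul_nonneg hC.le (mul_nonneg (hf p) hlogp0.le)) (hD_pos k) hDle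
        _ = C / D k * (f p * Real.log p) := by ring
    -- now sum and use hQ
    have hQsum : ∑ p ∈ (Finset.Ico (2^(k+1)) (2^(k+2))).filter Nat.Prime,
        f p * Real.log p ≤ C * (2:ℝ)^(k+2) := by
      have h2le : (2:ℝ) ≤ ((2^(k+2) : ℕ) : ℝ) := by
        have h : (2:ℕ) ≤ 2^(k+2) := by
          calc (2:ℕ) = 2^1 := rfl
          _ ≤ 2^(k+2) := Nat.pow_le_pow_right (by norm_num) (by omega)
        exact_mod_cast h
      have hQ' := hQ ((2^(k+2) : ℕ) : ℝ) h2le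
      rw [Nat.floor_natCast] at hQ'
      have hss : (Finset.Ico (2^(k+1)) (2^(k+2))).filter Nat.Prime
          ⊆ (Finset.Icc 1 (2^(k+2))).filter Nat.Prime := by
        apply Finset.filter_subset_filter
        intro p hp
        rw [Finset.mem_Ico] at hp
        rw [Finset.mem_Icc]
        have hpos : 0 < 2^(k+1) := pow_pos (by norm_num) (k+1)
        omega
      calc ∑ p ∈ (Finset.Ico (2^(k+1)) (2^(k+2))).filter Nat.Prime,
            f p * Real.log p
          ≤ ∑ p ∈ (Finset.Icc 1 (2^(k+2))).filter Nat.Prime,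
            f p * Real.log p := by
            apply Finset.sum_le_sum_of_subset_of_nonneg hss
            intro i hi _
            rw [Finset.mem_filter, Finset.mem_Icc] at hi
            have h1i : (1:ℝ) ≤ (i:ℝ) := by exact_mod_cast hi.1.1
            exact mul_nonneg (hf i) (Real.log_nonneg h1i)
        _ ≤ C * ((2^(k+2) : ℕ) : ℝ) := hQ'
        _ = C * (2:ℝ)^(k+2) := by push_cast; ring
    calc ∑ p ∈ (Finset.Ico (2^(k+1)) (2^(k+2))).filter Nat.Prime,
          C * f p / (R p * p)
        ≤ ∑ p ∈ (Finset.Ico (2^(k+1)) (2^(k+2))).filter Nat.Prime,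
          C / D k * (f p * Real.log p) := Finset.sum_le_sum hterm
      _ = C / D k * ∑ p ∈ (Finset.Ico (2^(k+1)) (2^(k+2))).filter Nat.Prime,
          f p * Real.log p := by rw [Finset.mul_sum]
      _ ≤ C / D k * (C * (2:ℝ)^(k+2)) := by
          apply mul_le_mul_of_nonneg_left hQsum
          exact div_nonneg hC.le (hD_pos k).le
      _ = 4 * C^2 * ((1 / D k) * 2^k) := by
          have h4 : (2:ℝ)^(k+2) = 4 * 2^k := by rw [pow_add]; ring
          rw [h4]; ring
      _ ≤ 4 * C^2 * ∫ t in Set.Ico ((2:ℝ)^k) ((2:ℝ)^(k+1)), w t :=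
          mul_le_mul_of_nonneg_left (hIk k hk) (by positivity)
  -- nonnegativity of the comparison terms
  have hg_nonneg : ∀ i : ℕ, i.Prime → 0 ≤ C * f i / (R i * i) := by
    intro i hi
    have h2 : 2 ≤ i := hi.two_le
    have h1 : (1:ℝ) < (i:ℝ) := by exact_mod_cast h2.trans_lt' one_lt_two
    have hR1 : 1 < R ((i:ℕ):ℝ) := hR_pos _ h1
    exact div_nonneg (mul_nonneg hC.le (hf i))
      (mul_pos (by linarith) (by linarith)).le
  -- the comparison function on ℕ
  set H : ℕ → ℝ := fun i => if i.Prime then C * f i / (R i * i) else 0 with hH_def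
  have hH_nonneg : ∀ i, 0 ≤ H i := by
    intro i
    rw [hH_def]
    by_cases hi : i.Prime
    · simpa [hi] using hg_nonneg i hi
    · simp [hi]
  -- dyadic blocks of primes
  set Pk : ℕ → Finset ℕ := fun k => (Finset.Ico (2^(k+1)) (2^(k+2))).filter Nat.Prime
    with hPk_def
  have hPDF : ∀ a b : ℕ, a < b → Disjoint (Pk a) (Pk b) := by
    intro a b hab
    rw [Finset.disjoint_left]
    intro p hpa hpb
    rw [hPk_def] at hpa hpb
    simp only [Finset.mem_filter, Finset.mem_Ico] at hpa hpb
    have h : 2^(a+2) ≤ 2^(b+1) := Nat.pow_le_pow_right (by norm_num) (by omega)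
    omega
  have hPDS : ∀ a b : ℕ, a < b →
      Disjoint (Set.Ico ((2:ℝ)^a) ((2:ℝ)^(a+1))) (Set.Ico ((2:ℝ)^b) ((2:ℝ)^(b+1))) := by
    intro a b hab
    rw [Set.disjoint_left]
    intro t hta htb
    have h : (2:ℝ)^(a+1) ≤ 2^b := pow_le_pow_right₀ one_le_two (by omega)
    have := hta.2
    have := htb.1
    linarith
  -- the main partial-sum bound
  have hH_bound : ∀ n, ∑ i ∈ Finset.range n, H i
      ≤ C * f 2 / (R 2 * 2) + C * f 3 / (R 3 * 3) + 4 * C^2 * A := by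
    intro n
    have hsum : ∑ i ∈ Finset.range n, H i
        = ∑ p ∈ (Finset.range n).filter Nat.Prime, C * f p / (R p * p) := by
      rw [hH_def, Finset.sum_filter]
    rw [hsum,
      ← Finset.sum_filter_add_sum_filter_not ((Finset.range n).filter Nat.Prime)
        (· < 5)]
    have part1 : ∑ p ∈ ((Finset.range n).filter Nat.Prime).filter (· < 5),
        C * f p / (R p * p) ≤ C * f 2 / (R 2 * 2) + C * f 3 / (R 3 * 3) := by
      have hsub : ((Finset.range n).filter Nat.Prime).filter (· < 5)
          ⊆ ({2, 3} : Finset ℕ) := by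
        intro p hp
        simp only [Finset.mem_filter, Finset.mem_range] at hp
        obtain ⟨⟨_, hpp⟩, hp5⟩ := hp
        have h2 := hpp.two_le
        have h23 : p = 2 ∨ p = 3 := by
          interval_cases p <;> revert hpp <;> decide
        rcases h23 with rfl | rfl <;> simp
      calc ∑ p ∈ ((Finset.range n).filter Nat.Prime).filter (· < 5),
            C * f p / (R p * p)
          ≤ ∑ p ∈ ({2, 3} : Finset ℕ), C * f p / (R p * p) := by
            apply Finset.sum_le_sum_of_subset_of_nonneg hsub
            intro i hi _
            have : i = 2 ∨ i = 3 := by simpa using hi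
            rcases this with rfl | rfl
            · exact hg_nonneg 2 (by norm_num)
            · exact hg_nonneg 3 (by norm_num)
        _ = C * f 2 / (R 2 * 2) + C * f 3 / (R 3 * 3) := by
            rw [Finset.sum_pair (by norm_num : (2:ℕ) ≠ 3)]
            norm_num
    have part2 : ∑ p ∈ ((Finset.range n).filter Nat.Prime).filter (fun p => ¬ p < 5),
        C * f p / (R p * p) ≤ 4 * C^2 * A := by
      have hsub2 : ((Finset.range n).filter Nat.Prime).filter (fun p => ¬ p < 5)
          ⊆ (Finset.Icc 1 n).biUnion Pk := by
        intro p hp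
        simp only [Finset.mem_filter, Finset.mem_range, not_lt] at hp
        obtain ⟨⟨hpn, hpp⟩, hp5⟩ := hp
        set L := Nat.log 2 p with hL_def
        have hL2 : 2 ≤ L := by
          rw [hL_def]
          exact (Nat.le_log_iff_pow_le (by norm_num) (by omega)).2 (by omega)
        have h1 : 2^L ≤ p := Nat.pow_log_le_self 2 (by omega)
        have h2 : p < 2^(L+1) := Nat.lt_pow_succ_log_self (by norm_num) p
        have hLp : L < 2^L := Nat.lt_two_pow_self
        have hLn : L < n := by omega
        rw [Finset.mem_biUnion]
        refine ⟨L - 1, Finset.mem_Icc.2 ⟨by omega, by omega⟩, ?_⟩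
        rw [hPk_def]
        have e1 : L - 1 + 1 = L := by omega
        have e2 : L - 1 + 2 = L + 1 := by omega
        simp only [e1, e2, Finset.mem_filter, Finset.mem_Ico]
        exact ⟨⟨h1, h2⟩, hpp⟩
      have hPD : Set.PairwiseDisjoint ↑(Finset.Icc 1 n) Pk := by
        intro a _ b _ hab
        rcases hab.lt_or_gt with h | h
        · exact hPDF a b h
        · exact (hPDF b a h).symm
      have hUsub : (⋃ k ∈ Finset.Icc 1 n, Set.Ico ((2:ℝ)^k) ((2:ℝ)^(k+1)))
          ⊆ Set.Ici (2:ℝ) := by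
        intro t ht
        simp only [Set.mem_iUnion] at ht
        obtain ⟨k, hk, htk⟩ := ht
        exact le_trans (h2pow2 k (Finset.mem_Icc.1 hk).1) htk.1
      calc ∑ p ∈ ((Finset.range n).filter Nat.Prime).filter (fun p => ¬ p < 5),
            C * f p / (R p * p)
          ≤ ∑ p ∈ (Finset.Icc 1 n).biUnion Pk, C * f p / (R p * p) := by
            apply Finset.sum_le_sum_of_subset_of_nonneg hsub2
            intro i hi _
            rw [Finset.mem_biUnion] at hi
            obtain ⟨k, _, hik⟩ := hi
            rw [hPk_def] at hik
            rw [Finset.mem_filter] at hik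
            exact hg_nonneg i hik.2
        _ = ∑ k ∈ Finset.Icc 1 n, ∑ p ∈ Pk k, C * f p / (R p * p) :=
            Finset.sum_biUnion hPD
        _ ≤ ∑ k ∈ Finset.Icc 1 n,
            4 * C^2 * ∫ t in Set.Ico ((2:ℝ)^k) ((2:ℝ)^(k+1)), w t := by
            apply Finset.sum_le_sum
            intro k hk
            exact hSk k (Finset.mem_Icc.1 hk).1
        _ = 4 * C^2 * ∫ t in ⋃ k ∈ Finset.Icc 1 n,
              Set.Ico ((2:ℝ)^k) ((2:ℝ)^(k+1)), w t := by
            rw [MeasureTheory.integral_biUnion_finset _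
              (fun k _ => measurableSet_Ico)
              (by
                intro a _ b _ hab
                rcases hab.lt_or_gt with h | h
                · exact hPDS a b h
                · exact (hPDS b a h).symm)
              (fun k hk => hint.mono_set (fun t ht =>
                le_trans (h2pow2 k (Finset.mem_Icc.1 hk).1) ht.1)),
              Finset.mul_sum]
        _ ≤ 4 * C^2 * A :=
            mul_le_mul_of_nonneg_left (hA_sub _ hUsub) (by positivity)
    linarith
  have hHsum : Summable H := summable_of_sum_range_le hH_nonneg hH_bound
  have hsubS : Summable (fun p : Nat.Primes => C * f ↑p / (R ↑p * ↑p)) := by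
    have h1 := hHsum.subtype {n | n.Prime}
    refine h1.congr fun p => ?_
    show H p.1 = _
    rw [hH_def]
    exact if_pos p.2
  apply Summable.of_nonneg_of_le _ _ hsubS
  · intro p
    have h2 : 2 ≤ (p:ℕ) := p.2.two_le
    have h1 : (1:ℝ) ≤ ((p:ℕ):ℝ) := by exact_mod_cast Nat.one_le_of_lt h2
    exact mul_nonneg (div_nonneg (sq_nonneg _) (sq_nonneg _)) (Real.log_nonneg h1)
  · intro p
    have hpp := p.2
    have h2 : (2:ℝ) ≤ ((p:ℕ):ℝ) := by exact_mod_cast hpp.two_le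
    have h1 : (1:ℝ) < ((p:ℕ):ℝ) := by linarith
    have hR1 : 1 < R ((p:ℕ):ℝ) := hR_pos _ h1
    have hRne : R ((p:ℕ):ℝ) ≠ 0 := by linarith
    have hpne : ((p:ℕ):ℝ) ≠ 0 := by linarith
    have hb := hfp p hpp
    have hmul := mul_le_mul_of_nonneg_right hb
      (div_nonneg (hf p) (sq_nonneg ((p:ℕ):ℝ)))
    have e1 : f p * Real.log p * (f p / ((p:ℕ):ℝ)^2)
        = f p ^ 2 / ((p:ℕ):ℝ)^2 * Real.log p := by ring
    have e2 : C * ((p:ℕ):ℝ) / R ((p:ℕ):ℝ) * (f p / ((p:ℕ):ℝ)^2)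
        = C * f p / (R ((p:ℕ):ℝ) * ((p:ℕ):ℝ)) := by
      field_simp
    rw [e1, e2] at hmul
    exact hmul
end
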